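/- arXiv:2508.20833 — 2 statements merged into one kernel-verified Lean document; each statement's English description precedes it below -/
import Mathlib

section
/- The determinant of the Jacobian of the composite map u ↦ (p_1, …, p_{d-1}), where φ_j = σ(u_j) = e^{u_j}/(1+e^{u_j}) and p_j = φ_j ∏_{i<j}(1-φ_i), equals ∏_{i=1}^{d} p_i, where p_d = ∏_{i=1}^{d-1}(1-φ_i). -/
/-!
Each coordinate `p_j = σ(u_j) ∏_{i<j} (1 - σ(u_i))` is a product of functions of one variable
each, none of which involves `u_k` for `k > j`. Hence the Jacobian is lower triangular with
diagonal entries `σ'(u_j) ∏_{i<j} (1 - σ(u_i))`. For the logistic function `σ' = σ (1 - σ)`, so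
the diagonal entry is `p_j (1 - σ(u_j))`, and the product of the factors `1 - σ(u_j)` is `p_d`.
-/

open Finset

lemma Real.sigmoid_eq_exp_div (x : ℝ) : Real.sigmoid x = Real.exp x / (1 + Real.exp x) := by
  rw [Real.sigmoid_def, Real.exp_neg]
  field_simp
  ring

section Jacobian

variable {𝕜 : Type*} [NontriviallyNormedField 𝕜] {ι : Type*} [Fintype ι] [DecidableEq ι]

noncomputable def jacobianMatrix (F : (ι → 𝕜) → ι → 𝕜) (v : ι → 𝕜) : Matrix ι ι 𝕜 :=
  Matrix.of fun i j => fderiv 𝕜 F v (Pi.single j 1) i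

theorem HasFDerivAt.prod_comp_apply {f : ι → 𝕜 → 𝕜} {f' : ι → 𝕜} {v : ι → 𝕜}
    (hf : ∀ i, HasDerivAt (f i) (f' i) (v i)) :
    HasFDerivAt (fun w => ∏ i, f i (w i))
      (∑ i, (∏ m ∈ univ.erase i, f m (v m)) •
        f' i • ContinuousLinearMap.proj (R := 𝕜) (φ := fun _ : ι => 𝕜) i) v :=
  HasFDerivAt.finsetProd fun i _ => (hf i).comp_hasFDerivAt v (hasFDerivAt_apply i v)

theorem fderiv_prod_comp_apply_single {f : ι → 𝕜 → 𝕜} {f' : ι → 𝕜} {v : ι → 𝕜}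
    (hf : ∀ i, HasDerivAt (f i) (f' i) (v i)) (k : ι) :
    fderiv 𝕜 (fun w => ∏ i, f i (w i)) v (Pi.single k 1) =
      (∏ m ∈ univ.erase k, f m (v m)) * f' k := by
  rw [(HasFDerivAt.prod_comp_apply hf).fderiv]
  simp [Pi.single_apply]

end Jacobian

section StickBreaking

variable {𝕜 : Type*} [NontriviallyNormedField 𝕜] {n : ℕ}

noncomputable def stickBreaking (σ : 𝕜 → 𝕜) (v : Fin n → 𝕜) (j : Fin n) : 𝕜 :=
  σ (v j) * ∏ i ∈ univ.filter (· < j), (1 - σ (v i))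

def stickFactor (σ : 𝕜 → 𝕜) (j i : Fin n) (t : 𝕜) : 𝕜 :=
  if i = j then σ t else if i < j then 1 - σ t else 1

theorem stickBreaking_eq_prod_stickFactor (σ : 𝕜 → 𝕜) (v : Fin n → 𝕜) (j : Fin n) :
    stickBreaking σ v j = ∏ i, stickFactor σ j i (v i) := by
  rw [← mul_prod_erase univ _ (mem_univ j), stickBreaking, prod_filter,
    ← prod_erase univ (a := j) (by simp)]
  refine congrArg₂ _ (by simp [stickFactor]) (prod_congr rfl fun i hi => ?_)
  simp [stickFactor, (mem_erase.mp hi).1]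

theorem hasDerivAt_stickFactor {σ : 𝕜 → 𝕜} {σ' t : 𝕜} (hσ : HasDerivAt σ σ' t) (j i : Fin n) :
    HasDerivAt (stickFactor σ j i) (if i = j then σ' else if i < j then -σ' else 0) t := by
  unfold stickFactor
  split_ifs
  · exact hσ
  · exact hσ.const_sub 1
  · exact hasDerivAt_const t 1

theorem jacobianMatrix_stickBreaking_apply {σ σ' : 𝕜 → 𝕜} {v : Fin n → 𝕜}
    (hσ : ∀ i, HasDerivAt σ (σ' (v i)) (v i)) (j k : Fin n) :
    jacobianMatrix (stickBreaking σ) v j k =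
      (∏ m ∈ univ.erase k, stickFactor σ j m (v m)) *
        if k = j then σ' (v k) else if k < j then -σ' (v k) else 0 := by
  have hF : (stickBreaking σ : (Fin n → 𝕜) → Fin n → 𝕜) =
      fun w j => ∏ i, stickFactor σ j i (w i) :=
    funext₂ (stickBreaking_eq_prod_stickFactor σ)
  have hfactor (j i : Fin n) := hasDerivAt_stickFactor (hσ i) j i
  rw [jacobianMatrix, Matrix.of_apply, hF, fderiv_pi, ContinuousLinearMap.pi_apply,
    fderiv_prod_comp_apply_single (hfactor j)]
  exact fun j => (HasFDerivAt.prod_comp_apply (hfactor j)).differentiableAt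

theorem jacobianMatrix_stickBreaking_isLowerTriangular {σ σ' : 𝕜 → 𝕜} {v : Fin n → 𝕜}
    (hσ : ∀ i, HasDerivAt σ (σ' (v i)) (v i)) :
    (jacobianMatrix (stickBreaking σ) v).IsLowerTriangular := fun j k (hjk : j < k) => by
  simp [jacobianMatrix_stickBreaking_apply hσ, hjk.ne', hjk.not_gt]

theorem jacobianMatrix_stickBreaking_diag {σ σ' : 𝕜 → 𝕜} {v : Fin n → 𝕜}
    (hσ : ∀ i, HasDerivAt σ (σ' (v i)) (v i)) (j : Fin n) :
    jacobianMatrix (stickBreaking σ) v j j =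
      σ' (v j) * ∏ i ∈ univ.filter (· < j), (1 - σ (v i)) := by
  rw [jacobianMatrix_stickBreaking_apply hσ, if_pos rfl, mul_comm, prod_filter,
    ← prod_erase univ (a := j) (by simp)]
  refine congrArg _ (prod_congr rfl fun i hi => ?_)
  simp [stickFactor, (mem_erase.mp hi).1]

theorem det_jacobianMatrix_stickBreaking {σ σ' : 𝕜 → 𝕜} {v : Fin n → 𝕜}
    (hσ : ∀ i, HasDerivAt σ (σ' (v i)) (v i)) :
    (jacobianMatrix (stickBreaking σ) v).det =
      ∏ j, σ' (v j) * ∏ i ∈ univ.filter (· < j), (1 - σ (v i)) := by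
  rw [Matrix.det_of_isLowerTriangular _ (jacobianMatrix_stickBreaking_isLowerTriangular hσ)]
  exact prod_congr rfl fun j _ => jacobianMatrix_stickBreaking_diag hσ j

end StickBreaking

theorem det_jacobianMatrix_stickBreaking_sigmoid {n : ℕ} (v : Fin n → ℝ) :
    (jacobianMatrix (stickBreaking Real.sigmoid) v).det =
      (∏ j, stickBreaking Real.sigmoid v j) * ∏ j, (1 - Real.sigmoid (v j)) := by
  rw [det_jacobianMatrix_stickBreaking (σ' := fun t => Real.sigmoid t * (1 - Real.sigmoid t))
    fun i => Real.hasDerivAt_sigmoid (v i), ← prod_mul_distrib]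
  refine prod_congr rfl fun j _ => ?_
  rw [stickBreaking]
  ring

theorem logit_stick_breaking_jacobian_det_general (d : ℕ)
    (σ : ℝ → ℝ) (hσ : ∀ t, σ t = Real.exp t / (1 + Real.exp t))
    (u : Fin (d - 1) → ℝ)
    (G : (Fin (d - 1) → ℝ) → Fin (d - 1) → ℝ)
    (hG : ∀ v (j : Fin (d - 1)), G v j =
      σ (v j) * ∏ i ∈ Finset.univ.filter (fun i : Fin (d - 1) => (i : ℕ) < (j : ℕ)), (1 - σ (v i)))
    (p : Fin d → ℝ)
    (hp : ∀ k : Fin d, p k =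
      if h : (k : ℕ) < d - 1 then G u ⟨k, h⟩ else ∏ i : Fin (d - 1), (1 - σ (u i))) :
    Matrix.det (Matrix.of fun i j : Fin (d - 1) =>
        fderiv ℝ G u (Pi.single j (1 : ℝ) : Fin (d - 1) → ℝ) i) = ∏ k : Fin d, p k := by
  obtain rfl : σ = Real.sigmoid := funext fun t => (hσ t).trans (Real.sigmoid_eq_exp_div t).symm
  obtain rfl : G = stickBreaking Real.sigmoid := funext₂ hG
  rcases d with _ | n
  · simp
  · show (jacobianMatrix (stickBreaking Real.sigmoid) u).det = _
    simp [Fin.prod_univ_castSucc, hp, det_jacobianMatrix_stickBreaking_sigmoid]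

/-- The Jacobian determinant of the logit stick-breaking parametrization
u ↦ (p_1,…,p_{d-1}) equals ∏_{i=1}^d p_i. -/
theorem logit_stick_breaking_jacobian_det (d : ℕ) (hd : 2 ≤ d)
    (σ : ℝ → ℝ) (hσ : ∀ t, σ t = Real.exp t / (1 + Real.exp t))
    (u : Fin (d - 1) → ℝ)
    (G : (Fin (d - 1) → ℝ) → Fin (d - 1) → ℝ)
    (hG : ∀ v (j : Fin (d - 1)), G v j =
      σ (v j) * ∏ i ∈ Finset.univ.filter (fun i : Fin (d - 1) => (i : ℕ) < (j : ℕ)), (1 - σ (v i)))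
    (p : Fin d → ℝ)
    (hp : ∀ k : Fin d, p k =
      if h : (k : ℕ) < d - 1 then G u ⟨k, h⟩ else ∏ i : Fin (d - 1), (1 - σ (u i))) :
    Matrix.det (Matrix.of fun i j : Fin (d - 1) =>
        fderiv ℝ G u (Pi.single j (1 : ℝ) : Fin (d - 1) → ℝ) i) = ∏ k : Fin d, p k :=
  logit_stick_breaking_jacobian_det_general d σ hσ u G hG p hp
end

section
/- If the one-dimensional marginal density of u is proportional to e^{a u}/(1+e^u)^{a+b} with a, b > 0, then the second moment satisfies E[u²] ≤ (Γ(a+b)/(Γ(a)Γ(b))) · (2/a³ + 2/b³). -/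
/-!
Since `(1 + eᵘ)^(a+b)` dominates both `1` and `e^{(a+b)u}`, the kernel `e^{au} / (1 + eᵘ)^(a+b)`
is at most `e^{au}` and at most `e^{-bu}`. Using the first bound on `u ≤ 0` and the second on
`u > 0` reduces the second moment to two Gamma integrals `∫₀^∞ t² e^{-rt} dt = 2 / r³`.
-/

open MeasureTheory Set Real
open scoped Nat

theorem integrableOn_pow_mul_exp_neg_mul_Ioi (n : ℕ) {r : ℝ} (hr : 0 < r) :
    IntegrableOn (fun t : ℝ => t ^ n * exp (-(r * t))) (Ioi 0) := by
  refine (integrableOn_rpow_mul_exp_neg_mul_rpow (s := n) (by linarith [n.cast_nonneg (α := ℝ)])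
    one_pos hr).congr_fun (fun t _ => ?_) measurableSet_Ioi
  simp [rpow_natCast]

theorem integral_pow_mul_exp_neg_mul_Ioi (n : ℕ) {r : ℝ} (hr : 0 < r) :
    ∫ t in Ioi 0, t ^ n * exp (-(r * t)) = n ! / r ^ (n + 1) := by
  have h := integral_rpow_mul_exp_neg_mul_Ioi (a := n + 1) (by positivity) hr
  rw [Gamma_nat_eq_factorial, ← Nat.cast_succ, rpow_natCast] at h
  simpa [rpow_natCast, div_eq_inv_mul] using h

theorem integrableOn_neg_pow_mul_exp_mul_Iic (n : ℕ) {r : ℝ} (hr : 0 < r) :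
    IntegrableOn (fun t : ℝ => (-t) ^ n * exp (r * t)) (Iic 0) := by
  have h : IntegrableOn (fun t : ℝ => t ^ n * exp (-(r * t))) (Ici (-0)) := by
    rw [neg_zero, integrableOn_Ici_iff_integrableOn_Ioi enorm_ne_top]
    exact integrableOn_pow_mul_exp_neg_mul_Ioi n hr
  simpa using h.comp_neg_Iic

theorem integral_neg_pow_mul_exp_mul_Iic (n : ℕ) {r : ℝ} (hr : 0 < r) :
    ∫ t in Iic 0, (-t) ^ n * exp (r * t) = n ! / r ^ (n + 1) := by
  simpa [integral_pow_mul_exp_neg_mul_Ioi n hr] using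
    integral_comp_neg_Iic 0 (fun t : ℝ => t ^ n * exp (-(r * t)))

theorem exp_mul_div_one_add_exp_rpow_le_exp_mul {a b : ℝ} (hab : 0 ≤ a + b) (u : ℝ) :
    exp (a * u) / (1 + exp u) ^ (a + b) ≤ exp (a * u) :=
  div_le_self (exp_pos _).le (one_le_rpow (by linarith [exp_pos u]) hab)

theorem exp_mul_div_one_add_exp_rpow_le_exp_neg_mul {a b : ℝ} (hab : 0 ≤ a + b) (u : ℝ) :
    exp (a * u) / (1 + exp u) ^ (a + b) ≤ exp (-(b * u)) :=
  calc exp (a * u) / (1 + exp u) ^ (a + b)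
      ≤ exp (a * u) / exp u ^ (a + b) := by
        gcongr
        linarith
    _ = exp (-(b * u)) := by rw [← exp_mul, ← exp_sub]; ring_nf

theorem integral_sq_mul_exp_mul_div_one_add_exp_rpow_le {a b : ℝ} (ha : 0 < a) (hb : 0 < b) :
    ∫ u, u ^ 2 * (exp (a * u) / (1 + exp u) ^ (a + b)) ≤ 2 / a ^ 3 + 2 / b ^ 3 := by
  have hab : 0 ≤ a + b := by linarith
  have hIic := integrableOn_neg_pow_mul_exp_mul_Iic 2 ha
  have hIoi : IntegrableOn (fun u => u ^ 2 * exp (-(b * u))) (Iic 0)ᶜ := by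
    simpa only [compl_Iic] using integrableOn_pow_mul_exp_neg_mul_Ioi 2 hb
  set g := (Iic (0 : ℝ)).piecewise (fun u => (-u) ^ 2 * exp (a * u))
    (fun u => u ^ 2 * exp (-(b * u))) with hg
  have hle (u : ℝ) : u ^ 2 * (exp (a * u) / (1 + exp u) ^ (a + b)) ≤ g u := by
    by_cases hu : u ∈ Iic 0
    · rw [hg, piecewise_eq_of_mem _ _ _ hu, neg_sq]
      exact mul_le_mul_of_nonneg_left (exp_mul_div_one_add_exp_rpow_le_exp_mul hab u) (sq_nonneg u)
    · rw [hg, piecewise_eq_of_notMem _ _ _ hu]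
      exact mul_le_mul_of_nonneg_left (exp_mul_div_one_add_exp_rpow_le_exp_neg_mul hab u)
        (sq_nonneg u)
  calc ∫ u, u ^ 2 * (exp (a * u) / (1 + exp u) ^ (a + b))
      ≤ ∫ u, g u := integral_mono_of_nonneg (.of_forall fun u => by positivity)
        (.piecewise measurableSet_Iic hIic hIoi) (.of_forall hle)
    _ = 2 / a ^ 3 + 2 / b ^ 3 := by
      rw [integral_piecewise measurableSet_Iic hIic hIoi, compl_Iic,
        integral_neg_pow_mul_exp_mul_Iic 2 ha, integral_pow_mul_exp_neg_mul_Ioi 2 hb]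
      norm_num

/-- Second moment bound for the density proportional to e^{au}/(1+e^u)^{a+b}. -/
theorem second_moment_bound (a b : ℝ) (ha : 0 < a) (hb : 0 < b)
    (f : ℝ → ℝ)
    (hf : ∀ u, f u = Real.Gamma (a + b) / (Real.Gamma a * Real.Gamma b) *
      (Real.exp (a * u) / (1 + Real.exp u) ^ (a + b))) :
    ∫ u : ℝ, u ^ 2 * f u ≤
      Real.Gamma (a + b) / (Real.Gamma a * Real.Gamma b) * (2 / a ^ 3 + 2 / b ^ 3) := by
  have hC : 0 ≤ Gamma (a + b) / (Gamma a * Gamma b) := by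
    have := Gamma_pos_of_pos (add_pos ha hb)
    have := Gamma_pos_of_pos ha
    have := Gamma_pos_of_pos hb
    positivity
  simp_rw [hf, mul_left_comm _ (Gamma (a + b) / _), integral_const_mul]
  exact mul_le_mul_of_nonneg_left (integral_sq_mul_exp_mul_div_one_add_exp_rpow_le ha hb) hC
end
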